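/- Eight-round king consensus, correctness. Assume n > 3t and each node v has inputs x_v ∈ 𝒱 and ℓ_v ∈ Option (Fin n). Suppose k : Fin n → 𝒱 and h : Fin n → {0,1} satisfy the graded king consensus specification with respect to (x, ℓ): (i) if there is x ∈ 𝒱 with x_v = x for all v ∈ H then k_v = x for all v ∈ H; (ii) if there are x ∈ 𝒱 and ℓ ∈ H with (x_v, ℓ_v) = (x, some ℓ) for all v ∈ H then h_ℓ = 1; (iii) if there is ℓ ∈ H with ℓ_v = some ℓ for all v ∈ H and h_ℓ = 1, then k_v = k_ℓ for all v ∈ H. In a further round, a correct node w sends the special message runGC to all nodes iff ℓ_w = some w and h_w = 0; define s_v := 1 if ℓ_v = some ℓ' and v received runGC from ℓ' in this round, and s_v := 0 otherwise. Suppose z : Fin n → 𝒱 and g : Fin n → {0,1} satisfy the weak graded agreement specification with respect to the inputs (k_v, s_v): (iv) if there is c ∈ 𝒱 with k_v = c for all v ∈ H then (z_v, g_v) = (c, 1) for all v ∈ H; (v) if s_v = 1 for all v ∈ H and g_w = 1 for some w ∈ H, then z_v = z_w for all v ∈ H. In a final round, a correct node w sends z_w to all nodes iff ℓ_w = some w.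 Each correct node v outputs y_v ∈ Option 𝒱 as follows: if ℓ_v = none then y_v := none; otherwise, if g_v = 0 and v received a value c from ℓ' (where ℓ_v = some ℓ') in the final round, then y_v := some c; otherwise y_v := some z_v. Then: (Validity) if there is x ∈ 𝒱 with x_v = x for all v ∈ H, then y_v ∈ {some x, none} for all v ∈ H; (Default) if ℓ_v = none for all v ∈ H, then y_v = none for all v ∈ H; (King Agreement) if there is ℓ ∈ H with ℓ_v = some ℓ for all v ∈ H, then y_v = y_ℓ ≠ none for all v ∈ H. -/

import Mathlib

/-!
For validity, a unanimous input survives graded king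
consensus and weak graded agreement with grade 1, so every correct node with a leader outputs
it. For king agreement with a correct king `ℓ₀`, split on its grade `h ℓ₀`. If it is 1, graded
king agreement makes `k` common, so every correct node outputs `k ℓ₀`. If it is 0, the king
sends `runGC`, so `s ≡ 1` on the correct nodes; then a node of grade 0 adopts the king's
broadcast `z ℓ₀`, and a node of grade 1 outputs its own `z v`, which weak graded agreement
forces to equal `z ℓ₀`.
-/

section

variable {n : ℕ} {𝒱 : Type*}

def OutputRule (ℓ : Fin n → Option (Fin n)) (g : Fin n → Fin 2)
    (recvF : Fin n → Fin n → Option 𝒱) (z : Fin n → 𝒱) (y : Fin n → Option 𝒱) (v : Fin n) :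
    Prop :=
  (ℓ v = none → y v = none) ∧
  (∀ ℓ' : Fin n, ℓ v = some ℓ' →
    (g v = 0 → (∀ c : 𝒱, recvF v ℓ' = some c → y v = some c) ∧
      (recvF v ℓ' = none → y v = some (z v))) ∧
    (g v ≠ 0 → y v = some (z v)))

namespace OutputRule

variable {ℓ : Fin n → Option (Fin n)} {g : Fin n → Fin 2} {recvF : Fin n → Fin n → Option 𝒱}
  {z : Fin n → 𝒱} {y : Fin n → Option 𝒱} {v ℓ' : Fin n}

theorem eq_none (hy : OutputRule ℓ g recvF z y v) (hℓ : ℓ v = none) : y v = none :=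
  hy.1 hℓ

theorem eq_some_of_grade_one (hy : OutputRule ℓ g recvF z y v) (hℓ : ℓ v = some ℓ')
    (hg : g v = 1) : y v = some (z v) :=
  (hy.2 ℓ' hℓ).2 (by simp [hg])

theorem eq_some_of_recv {c : 𝒱} (hy : OutputRule ℓ g recvF z y v) (hℓ : ℓ v = some ℓ')
    (hg : g v = 0) (hc : recvF v ℓ' = some c) : y v = some c :=
  ((hy.2 ℓ' hℓ).1 hg).1 c hc

end OutputRule

variable {H : Finset (Fin n)} {ℓ : Fin n → Option (Fin n)} {k z : Fin n → 𝒱}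
  {g : Fin n → Fin 2} {recvF : Fin n → Fin n → Option 𝒱} {y : Fin n → Option 𝒱}

theorem output_eq_of_common_input {c : 𝒱}
    (hiv : ∀ c : 𝒱, (∀ v ∈ H, k v = c) → ∀ v ∈ H, z v = c ∧ g v = 1)
    (hout : ∀ v ∈ H, OutputRule ℓ g recvF z y v) (hk : ∀ v ∈ H, k v = c)
    {v ℓ' : Fin n} (hv : v ∈ H) (hℓ : ℓ v = some ℓ') : y v = some c := by
  obtain ⟨hz, hg⟩ := hiv c hk v hv
  rw [(hout v hv).eq_some_of_grade_one hℓ hg, hz]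

theorem all_signal_of_king_grade_zero {h s : Fin n → Fin 2}
    {recvGC : Fin n → Fin n → Option Unit}
    (hGC : ∀ v : Fin n, ∀ w ∈ H, recvGC v w =
      if ℓ w = some w ∧ h w = 0 then some () else none)
    (hs : ∀ v ∈ H, (s v = 1 ↔ ∃ ℓ' : Fin n, ℓ v = some ℓ' ∧ recvGC v ℓ' = some ()))
    {ℓ₀ : Fin n} (hℓ₀ : ℓ₀ ∈ H) (hking : ∀ v ∈ H, ℓ v = some ℓ₀) (h0 : h ℓ₀ = 0) :
    ∀ v ∈ H, s v = 1 := fun v hv =>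
  (hs v hv).2 ⟨ℓ₀, hking v hv, by rw [hGC v ℓ₀ hℓ₀, if_pos ⟨hking ℓ₀ hℓ₀, h0⟩]⟩

theorem output_eq_king_value_of_all_signal {s : Fin n → Fin 2}
    (hv : (∀ v ∈ H, s v = 1) → ∀ w ∈ H, g w = 1 → ∀ v ∈ H, z v = z w)
    (hF : ∀ v : Fin n, ∀ w ∈ H, recvF v w = if ℓ w = some w then some (z w) else none)
    (hout : ∀ v ∈ H, OutputRule ℓ g recvF z y v) (hsig : ∀ v ∈ H, s v = 1)
    {ℓ₀ : Fin n} (hℓ₀ : ℓ₀ ∈ H) (hking : ∀ v ∈ H, ℓ v = some ℓ₀) :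
    ∀ v ∈ H, y v = some (z ℓ₀) := by
  intro v hvH
  by_cases hg : g v = 0
  · refine (hout v hvH).eq_some_of_recv (hking v hvH) hg ?_
    rw [hF v ℓ₀ hℓ₀, if_pos (hking ℓ₀ hℓ₀)]
  · have hg1 : g v = 1 := Fin.eq_one_of_ne_zero _ hg
    rw [(hout v hvH).eq_some_of_grade_one (hking v hvH) hg1, hv hsig v hvH hg1 ℓ₀ hℓ₀]

end

theorem king_consensus_eight_rounds_correct
    {n : ℕ} {𝒱 : Type*}
    (H : Finset (Fin n))
    (x : Fin n → 𝒱) (ℓ : Fin n → Option (Fin n))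
    (k : Fin n → 𝒱) (h : Fin n → Fin 2)
    -- (i) graded-king-consensus validity
    (hi : ∀ c : 𝒱, (∀ v ∈ H, x v = c) → ∀ v ∈ H, k v = c)
    -- (iii) graded king agreement
    (hiii : ∀ ℓ₀ ∈ H, (∀ v ∈ H, ℓ v = some ℓ₀) → h ℓ₀ = 1 → ∀ v ∈ H, k v = k ℓ₀)
    (recvGC : Fin n → Fin n → Option Unit)
    -- signaling round: a correct node sends runGC to all nodes iff it is its own
    -- leader and has grade 0
    (hGC : ∀ v : Fin n, ∀ w ∈ H, recvGC v w =
      if ℓ w = some w ∧ h w = 0 then some () else none)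
    (s : Fin n → Fin 2)
    -- a correct node sets s = 1 iff it received runGC from its leader
    (hs : ∀ v ∈ H, (s v = 1 ↔ ∃ ℓ' : Fin n, ℓ v = some ℓ' ∧ recvGC v ℓ' = some ()))
    (z : Fin n → 𝒱) (g : Fin n → Fin 2)
    -- (iv) weak-graded-agreement validity for inputs (k, s)
    (hiv : ∀ c : 𝒱, (∀ v ∈ H, k v = c) → ∀ v ∈ H, z v = c ∧ g v = 1)
    -- (v) weak graded agreement for inputs (k, s)
    (hv : (∀ v ∈ H, s v = 1) → ∀ w ∈ H, g w = 1 → ∀ v ∈ H, z v = z w)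
    (recvF : Fin n → Fin n → Option 𝒱)
    -- final round: a correct node sends z to all nodes iff it is its own leader
    (hF : ∀ v : Fin n, ∀ w ∈ H, recvF v w = if ℓ w = some w then some (z w) else none)
    (y : Fin n → Option 𝒱)
    -- output rule at correct nodes
    (hout : ∀ v ∈ H,
      (ℓ v = none → y v = none) ∧
      (∀ ℓ' : Fin n, ℓ v = some ℓ' →
        (g v = 0 → (∀ c : 𝒱, recvF v ℓ' = some c → y v = some c) ∧
          (recvF v ℓ' = none → y v = some (z v))) ∧
        (g v ≠ 0 → y v = some (z v)))) :
    -- Validity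
    (∀ c : 𝒱, (∀ v ∈ H, x v = c) → ∀ v ∈ H, y v = some c ∨ y v = none) ∧
    -- Default
    ((∀ v ∈ H, ℓ v = none) → ∀ v ∈ H, y v = none) ∧
    -- King Agreement
    (∀ ℓ₀ ∈ H, (∀ v ∈ H, ℓ v = some ℓ₀) → ∀ v ∈ H, y v = y ℓ₀ ∧ y ℓ₀ ≠ none) := by
  have hout : ∀ v ∈ H, OutputRule ℓ g recvF z y v := hout
  refine ⟨fun c hx v hvH => ?_, fun hnone v hvH => (hout v hvH).eq_none (hnone v hvH), ?_⟩
  · cases hℓ : ℓ v with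
    | none => exact .inr ((hout v hvH).eq_none hℓ)
    | some ℓ' => exact .inl (output_eq_of_common_input hiv hout (hi c hx) hvH hℓ)
  intro ℓ₀ hℓ₀ hking
  obtain ⟨c, hc⟩ : ∃ c, ∀ v ∈ H, y v = some c := by
    by_cases h0 : h ℓ₀ = 0
    · exact ⟨z ℓ₀, output_eq_king_value_of_all_signal hv hF hout
        (all_signal_of_king_grade_zero hGC hs hℓ₀ hking h0) hℓ₀ hking⟩
    · have h1 : h ℓ₀ = 1 := Fin.eq_one_of_ne_zero _ h0
      exact ⟨k ℓ₀, fun v hvH =>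
        output_eq_of_common_input hiv hout (hiii ℓ₀ hℓ₀ hking h1) hvH (hking v hvH)⟩
  intro v hvH
  rw [hc v hvH, hc ℓ₀ hℓ₀]
  exact ⟨rfl, Option.some_ne_none c⟩
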